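/- arXiv:2510.10832 — 2 statements merged into one kernel-verified Lean document; each statement's English description precedes it below -/
import Mathlib

section
/- Let f(T) = -K₄T⁴ - K₁T + K₀ with K₁, K₄ > 0, K₀ > 0, and steady state s₁ > 0 (the positive root of f). Let T(τ) solve dT/dτ = f(T) with T(0) = T₀ ∈ [0, Tmax] where s₁ ≤ Tmax. Then T(τ) ≤ max(T₀, s₁) ≤ Tmax for all τ ≥ 0. -/
/-- Safety of the steady-state rating: if the steady state `s₁` is below
`Tmax`, the transient temperature never exceeds `max(T₀, s₁) ≤ Tmax`. -/
theorem transient_below_max (K₄ K₁ K₀ s₁ Tmax T₀ : ℝ)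
    (hK₄ : 0 < K₄) (hK₁ : 0 < K₁) (hK₀ : 0 < K₀) (hs₁ : 0 < s₁)
    (f : ℝ → ℝ) (hf : ∀ x : ℝ, f x = -K₄ * x ^ 4 - K₁ * x + K₀)
    (hroot : f s₁ = 0) (hs₁Tmax : s₁ ≤ Tmax)
    (hT₀ : T₀ ∈ Set.Icc (0 : ℝ) Tmax)
    (T : ℝ → ℝ) (hT0 : T 0 = T₀)
    (hODE : ∀ τ : ℝ, 0 ≤ τ → HasDerivAt T (f (T τ)) τ) :
    ∀ τ : ℝ, 0 ≤ τ → T τ ≤ max T₀ s₁ ∧ max T₀ s₁ ≤ Tmax := by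
  have hfneg : ∀ x : ℝ, s₁ < x → f x < 0 := by
    intro x hx
    have h0 : -K₄ * s₁ ^ 4 - K₁ * s₁ + K₀ = 0 := by rw [← hf]; exact hroot
    have hp : s₁ ^ 4 < x ^ 4 := pow_lt_pow_left₀ hx hs₁.le (by norm_num)
    rw [hf]; nlinarith
  intro τ hτ
  set M := max T₀ s₁ with hM
  have hMT : M ≤ Tmax := max_le hT₀.2 hs₁Tmax
  refine ⟨?_, hMT⟩
  by_contra hcon
  push_neg at hcon
  have hcont : ∀ t : ℝ, 0 ≤ t → ContinuousAt T t := fun t ht => (hODE t ht).continuousAt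
  have hcontOn : ContinuousOn T (Set.Icc 0 τ) :=
    fun t ht => (hcont t ht.1).continuousWithinAt
  set S := Set.Icc (0:ℝ) τ ∩ T ⁻¹' Set.Iic M with hSdef
  have hS0 : (0:ℝ) ∈ S :=
    ⟨⟨le_refl _, hτ⟩, by simp only [Set.mem_preimage, Set.mem_Iic, hT0]; exact le_max_left _ _⟩
  have hSne : S.Nonempty := ⟨0, hS0⟩
  have hSbdd : BddAbove S := ⟨τ, fun t ht => ht.1.2⟩
  have hclosed : IsClosed S :=
    hcontOn.preimage_isClosed_of_isClosed isClosed_Icc isClosed_Iic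
  have hScompact : IsCompact S :=
    isCompact_Icc.of_isClosed_subset hclosed (fun t ht => ht.1)
  set t₀ := sSup S with ht₀def
  have ht₀mem : t₀ ∈ S := hScompact.sSup_mem hSne
  have ht₀0 : 0 ≤ t₀ := ht₀mem.1.1
  have hTt₀ : T t₀ ≤ M := ht₀mem.2
  have ht₀τ : t₀ < τ := lt_of_le_of_ne ht₀mem.1.2 (by
    intro h; rw [h] at hTt₀; exact absurd hTt₀ (not_le.mpr hcon))
  have habove : ∀ t, t ∈ Set.Ioc t₀ τ → M < T t := by
    intro t ht
    by_contra h
    push_neg at h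
    have : t ∈ S := ⟨⟨le_trans ht₀0 ht.1.le, ht.2⟩, h⟩
    exact absurd (le_csSup hSbdd this) (not_le.mpr ht.1)
  have hcontOn' : ContinuousOn T (Set.Icc t₀ τ) :=
    fun t ht => (hcont t (le_trans ht₀0 ht.1)).continuousWithinAt
  have hsa : StrictAntiOn T (Set.Icc t₀ τ) := by
    apply strictAntiOn_of_deriv_neg (convex_Icc t₀ τ) hcontOn'
    intro x hx
    rw [interior_Icc] at hx
    have hx0 : 0 ≤ x := le_trans ht₀0 hx.1.le
    have hd := hODE x hx0
    rw [hd.deriv]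
    exact hfneg (T x) (lt_of_le_of_lt (le_max_right T₀ s₁) (habove x ⟨hx.1, hx.2.le⟩))
  have : T τ < T t₀ :=
    hsa (Set.left_mem_Icc.mpr ht₀τ.le) (Set.right_mem_Icc.mpr ht₀τ.le) ht₀τ
  linarith
end

section
/- Let g, y, z be vectors and suppose g = -Σₜ λₜ∇Φᵗ(y) with λₜ ≥ 0, Σₜ λₜ ≤ Λ, where each Φᵗ is C² with ‖∇²Φᵗ‖_op ≤ C_Δ on the segment [y, z], Φᵗ(y) = Tmax for active t, and Φᵗ(z) ≤ Tmax. Then gᵀ(z - y) ≥ -Λ·(C_Δ/2)·‖z - y‖². -/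
/-!
By the second-order Taylor bound, each active constraint satisfies
`∇Φᵗ(y)ᵀ(z - y) ≤ Φᵗ(z) - Φᵗ(y) + (C_Δ/2)‖z - y‖² ≤ (C_Δ/2)‖z - y‖²`, since `Φᵗ(z) ≤ Tmax = Φᵗ(y)`.
Summing with the nonnegative weights `λₜ`, whose total is at most `Λ`, gives the claim.
-/

open RealInnerProductSpace Set

variable {E F : Type*} [NormedAddCommGroup E] [NormedSpace ℝ E]
  [NormedAddCommGroup F] [NormedSpace ℝ F]

theorem norm_fderiv_sub_le_of_norm_fderiv_fderiv_le {f : E → F} {C : ℝ} {y z : E}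
    (hf' : ∀ x ∈ segment ℝ y z, DifferentiableAt ℝ (fderiv ℝ f) x)
    (bound : ∀ x ∈ segment ℝ y z, ‖fderiv ℝ (fderiv ℝ f) x‖ ≤ C) {s : ℝ} (hs : s ∈ Icc 0 1) :
    ‖fderiv ℝ f (y + s • (z - y)) - fderiv ℝ f y‖ ≤ C * s * ‖z - y‖ := by
  have hmem : y + s • (z - y) ∈ segment ℝ y z := by
    rw [segment_eq_image']; exact ⟨s, hs, rfl⟩
  have := (convex_segment y z).norm_image_sub_le_of_norm_fderiv_le hf' bound
    (left_mem_segment ℝ y z) hmem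
  rwa [add_sub_cancel_left, norm_smul, Real.norm_of_nonneg hs.1, ← mul_assoc] at this

theorem norm_image_sub_sub_fderiv_le_of_norm_fderiv_fderiv_le {f : E → F} {C : ℝ} {y z : E}
    (hf : ∀ x ∈ segment ℝ y z, DifferentiableAt ℝ f x)
    (hf' : ∀ x ∈ segment ℝ y z, DifferentiableAt ℝ (fderiv ℝ f) x)
    (bound : ∀ x ∈ segment ℝ y z, ‖fderiv ℝ (fderiv ℝ f) x‖ ≤ C) :
    ‖f z - f y - fderiv ℝ f y (z - y)‖ ≤ C / 2 * ‖z - y‖ ^ 2 := by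
  set v := z - y
  set γ : ℝ → E := fun s => y + s • v
  have hγ : ∀ s ∈ Icc (0 : ℝ) 1, γ s ∈ segment ℝ y z := fun s hs => by
    rw [segment_eq_image']; exact ⟨s, hs, rfl⟩
  have hderiv : ∀ s ∈ Icc (0 : ℝ) 1, HasDerivAt (fun s => f (γ s) - f y - s • fderiv ℝ f y v)
      (fderiv ℝ f (γ s) v - fderiv ℝ f y v) s := fun s hs => by
    have hline : HasDerivAt γ v s :=
      (((hasDerivAt_id s).smul_const v).const_add y).congr_deriv (one_smul ℝ v)
    have := (((hf _ (hγ s hs)).hasFDerivAt.comp_hasDerivAt s hline).sub_const (f y)).sub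
      ((hasDerivAt_id s).smul_const (fderiv ℝ f y v))
    exact this.congr_deriv (by rw [one_smul])
  -- The right derivative of the remainder along the segment is at most `C ‖v‖² s`, which is the
  -- derivative of the parabola `C / 2 ‖v‖² s²`; the fencing theorem turns this into a bound at `s = 1`.
  have key := image_norm_le_of_norm_deriv_right_le_deriv_boundary
    (B := fun s => C / 2 * ‖v‖ ^ 2 * s ^ 2) (B' := fun s => C * ‖v‖ ^ 2 * s)
    (fun s hs => (hderiv s hs).continuousAt.continuousWithinAt)
    (fun s hs => (hderiv s (Ico_subset_Icc_self hs)).hasDerivWithinAt) (by simp [γ])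
    (fun s => ((hasDerivAt_pow 2 s).const_mul (C / 2 * ‖v‖ ^ 2)).congr_deriv (by ring))
    (fun s hs => calc
      ‖fderiv ℝ f (γ s) v - fderiv ℝ f y v‖ = ‖(fderiv ℝ f (γ s) - fderiv ℝ f y) v‖ := rfl
      _ ≤ ‖fderiv ℝ f (γ s) - fderiv ℝ f y‖ * ‖v‖ := ContinuousLinearMap.le_opNorm _ _
      _ ≤ C * s * ‖v‖ * ‖v‖ := by
        gcongr
        exact norm_fderiv_sub_le_of_norm_fderiv_fderiv_le hf' bound (Ico_subset_Icc_self hs)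
      _ = C * ‖v‖ ^ 2 * s := by ring)
    (right_mem_Icc.2 zero_le_one)
  simpa [γ, v] using key

theorem fderiv_apply_sub_le_of_image_le {f : E → ℝ} {C : ℝ} {y z : E}
    (hf : ∀ x ∈ segment ℝ y z, DifferentiableAt ℝ f x)
    (hf' : ∀ x ∈ segment ℝ y z, DifferentiableAt ℝ (fderiv ℝ f) x)
    (bound : ∀ x ∈ segment ℝ y z, ‖fderiv ℝ (fderiv ℝ f) x‖ ≤ C) (hzy : f z ≤ f y) :
    fderiv ℝ f y (z - y) ≤ C / 2 * ‖z - y‖ ^ 2 := by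
  have := norm_image_sub_sub_fderiv_le_of_norm_fderiv_fderiv_le hf hf' bound
  rw [Real.norm_eq_abs, abs_le] at this
  linarith [this.1]

theorem kkt_weak_convexity_general {n m : ℕ}
    (Φ : Fin m → EuclideanSpace ℝ (Fin n) → ℝ)
    (lam : Fin m → ℝ) (Λ CΔ Tmax : ℝ)
    (hCΔ : 0 ≤ CΔ)
    (hlam : ∀ t, 0 ≤ lam t) (hsum : ∑ t, lam t ≤ Λ)
    (hΦ : ∀ t, ContDiff ℝ 2 (Φ t))
    (y z : EuclideanSpace ℝ (Fin n))
    (hHess : ∀ t, ∀ x ∈ segment ℝ y z, ‖fderiv ℝ (fderiv ℝ (Φ t)) x‖ ≤ CΔ)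
    (hactive : ∀ t, Φ t y = Tmax) (hfeas : ∀ t, Φ t z ≤ Tmax)
    (g : EuclideanSpace ℝ (Fin n))
    (hg : g = -∑ t, lam t • gradient (Φ t) y) :
    ⟪g, z - y⟫ ≥ -Λ * (CΔ / 2) * ‖z - y‖ ^ 2 := by
  have hdir (t : Fin m) : fderiv ℝ (Φ t) y (z - y) ≤ CΔ / 2 * ‖z - y‖ ^ 2 :=
    fderiv_apply_sub_le_of_image_le
      (fun x _ => ((hΦ t).differentiable two_ne_zero).differentiableAt)
      (fun x _ => ((hΦ t).fderiv_right le_rfl).differentiable one_ne_zero x)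
      (hHess t) ((hfeas t).trans (hactive t).ge)
  calc ⟪g, z - y⟫ = -∑ t, lam t * fderiv ℝ (Φ t) y (z - y) := by
        simp only [hg, inner_neg_left, sum_inner, real_inner_smul_left, inner_gradient_left]
    _ ≥ -∑ t, lam t * (CΔ / 2 * ‖z - y‖ ^ 2) := by
        gcongr with t
        exacts [hlam t, hdir t]
    _ = -(∑ t, lam t) * (CΔ / 2 * ‖z - y‖ ^ 2) := by rw [neg_mul, Finset.sum_mul]
    _ ≥ -Λ * (CΔ / 2) * ‖z - y‖ ^ 2 := by
        rw [mul_assoc]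
        gcongr

/-- KKT-based weak-convexity inequality: if `g = -Σₜ λₜ ∇Φᵗ(y)` with `λₜ ≥ 0`,
`Σₜ λₜ ≤ Λ`, each `Φᵗ` has Hessian bounded by `C_Δ` on the segment `[y, z]`,
`Φᵗ(y) = Tmax` and `Φᵗ(z) ≤ Tmax`, then `gᵀ(z - y) ≥ -Λ (C_Δ/2) ‖z - y‖²`. -/
theorem kkt_weak_convexity {n m : ℕ}
    (Φ : Fin m → EuclideanSpace ℝ (Fin n) → ℝ)
    (lam : Fin m → ℝ) (Λ CΔ Tmax : ℝ)
    (hΛ : 0 ≤ Λ) (hCΔ : 0 ≤ CΔ)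
    (hlam : ∀ t, 0 ≤ lam t) (hsum : ∑ t, lam t ≤ Λ)
    (hΦ : ∀ t, ContDiff ℝ 2 (Φ t))
    (y z : EuclideanSpace ℝ (Fin n))
    (hHess : ∀ t, ∀ x ∈ segment ℝ y z, ‖fderiv ℝ (fderiv ℝ (Φ t)) x‖ ≤ CΔ)
    (hactive : ∀ t, Φ t y = Tmax) (hfeas : ∀ t, Φ t z ≤ Tmax)
    (g : EuclideanSpace ℝ (Fin n))
    (hg : g = -∑ t, lam t • gradient (Φ t) y) :
    ⟪g, z - y⟫ ≥ -Λ * (CΔ / 2) * ‖z - y‖ ^ 2 :=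
  kkt_weak_convexity_general Φ lam Λ CΔ Tmax hCΔ hlam hsum hΦ y z hHess hactive hfeas g hg
end
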